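/- Let (G, X, H) be an A/QI triple with X a δ-hyperbolic graph and let X̂ be the cone-off of X with respect to the G-translates of an H-cocompact quasi-convex subgraph Y₀. Let g ∈ G be loxodromic on X with 2δ-quasi-geodesic axis α_g, and suppose the repelling fixed point g^{−∞} lies in the limit set Λ(Y) of some translate Y = g₀Y₀. Then some positive power of g stabilizes Y (setwise); consequently g acts elliptically on X̂. -/
import Mathlib


open Metric Set Pointwise

/-- The Gromov product `(x∣y)_w`. -/
noncomputable def gprod {X : Type*} [MetricSpace X] (w x y : X) : ℝ :=
  (dist w x + dist w y - dist x y) / 2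

/-- A geodesic metric space. -/
def IsGeodesicSpace (X : Type*) [MetricSpace X] : Prop :=
  ∀ x y : X, ∃ γ : ℝ → X, γ 0 = x ∧ γ (dist x y) = y ∧
    ∀ s ∈ Set.Icc (0:ℝ) (dist x y), ∀ t ∈ Set.Icc (0:ℝ) (dist x y),
      dist (γ s) (γ t) = |s - t|

/-- Word length with respect to a (symmetrized) generating set `S`. -/
noncomputable def wlen {G : Type*} [Group G] (S : Set G) (g : G) : ℕ :=
  sInf {n | ∃ l : List G, l.length = n ∧ (∀ x ∈ l, x ∈ S ∨ x⁻¹ ∈ S) ∧ l.prod = g}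



lemma AQI.gprod_comm {X : Type*} [MetricSpace X] (w x y : X) : gprod w x y = gprod w y x := by
  unfold gprod; rw [dist_comm x y]; ring

lemma AQI.gprod_le_fst {X : Type*} [MetricSpace X] (w x y : X) : gprod w x y ≤ dist w x := by
  have h := dist_triangle w x y
  unfold gprod; linarith

lemma AQI.gprod_base {X : Type*} [MetricSpace X] (w w' x y : X) :
    gprod w x y - dist w w' ≤ gprod w' x y := by
  have h1 := dist_triangle w w' x
  have h2 := dist_triangle w w' y
  unfold gprod; linarith

lemma AQI.gprod_arg {X : Type*} [MetricSpace X] (w x x' y : X) :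
    gprod w x y - dist x x' ≤ gprod w x' y := by
  have h1 := dist_triangle w x' x
  have h2 := dist_triangle x' x y
  have h3 : dist x' x = dist x x' := dist_comm x' x
  unfold gprod; linarith

/-- Twin geodesics from a common basepoint fellow-travel up to the Gromov product. -/
lemma AQI.twin {X : Type*} [MetricSpace X] (δ : ℝ) (hδ : 0 < δ)
    (hhyp : ∀ w x y z : X, min (gprod w x y) (gprod w y z) - δ ≤ gprod w x z)
    (w a b : X) (γ γ' : ℝ → X)
    (hγ0 : γ 0 = w) (hγ1 : γ (dist w a) = a)
    (hγiso : ∀ s ∈ Set.Icc (0:ℝ) (dist w a), ∀ t ∈ Set.Icc (0:ℝ) (dist w a),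
      dist (γ s) (γ t) = |s - t|)
    (hγ'0 : γ' 0 = w) (hγ'1 : γ' (dist w b) = b)
    (hγ'iso : ∀ s ∈ Set.Icc (0:ℝ) (dist w b), ∀ t ∈ Set.Icc (0:ℝ) (dist w b),
      dist (γ' s) (γ' t) = |s - t|)
    (t : ℝ) (ht0 : 0 ≤ t) (ht : t ≤ gprod w a b) :
    dist (γ t) (γ' t) ≤ 4 * δ := by
  have hta : t ≤ dist w a := ht.trans (AQI.gprod_le_fst w a b)
  have htb : t ≤ dist w b := ht.trans (by rw [AQI.gprod_comm]; exact AQI.gprod_le_fst w b a)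
  have h0a : (0:ℝ) ∈ Set.Icc (0:ℝ) (dist w a) := ⟨le_refl _, dist_nonneg⟩
  have h0b : (0:ℝ) ∈ Set.Icc (0:ℝ) (dist w b) := ⟨le_refl _, dist_nonneg⟩
  have hta' : t ∈ Set.Icc (0:ℝ) (dist w a) := ⟨ht0, hta⟩
  have htb' : t ∈ Set.Icc (0:ℝ) (dist w b) := ⟨ht0, htb⟩
  have hda : dist w a ∈ Set.Icc (0:ℝ) (dist w a) := ⟨dist_nonneg, le_refl _⟩
  have hdb : dist w b ∈ Set.Icc (0:ℝ) (dist w b) := ⟨dist_nonneg, le_refl _⟩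
  have hwp : dist w (γ t) = t := by
    rw [← hγ0, hγiso 0 h0a t hta', zero_sub, abs_neg, abs_of_nonneg ht0]
  have hpa : dist (γ t) a = dist w a - t := by
    have h := hγiso t hta' (dist w a) hda
    rw [hγ1] at h
    rw [h, abs_sub_comm, abs_of_nonneg (by linarith)]
  have hwq : dist w (γ' t) = t := by
    rw [← hγ'0, hγ'iso 0 h0b t htb', zero_sub, abs_neg, abs_of_nonneg ht0]
  have hqb : dist (γ' t) b = dist w b - t := by
    have h := hγ'iso t htb' (dist w b) hdb
    rw [hγ'1] at h
    rw [h, abs_sub_comm, abs_of_nonneg (by linarith)]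
  have e1 : gprod w (γ t) a = t := by unfold gprod; rw [hwp, hpa]; ring
  have e2 : gprod w b (γ' t) = t := by
    unfold gprod
    rw [hwq, dist_comm b (γ' t), hqb]; ring
  have h2 := hhyp w a b (γ' t)
  rw [e2] at h2
  have haq : t - δ ≤ gprod w a (γ' t) := by
    have : min (gprod w a b) t = t := min_eq_right ht
    linarith [h2, this.ge, this.le]
  have h1 := hhyp w (γ t) a (γ' t)
  rw [e1] at h1
  have hmin : t - δ ≤ min t (gprod w a (γ' t)) := le_min (by linarith) haq
  have hpq : t - 2*δ ≤ gprod w (γ t) (γ' t) := by linarith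
  have e3 : gprod w (γ t) (γ' t)
      = (dist w (γ t) + dist w (γ' t) - dist (γ t) (γ' t)) / 2 := rfl
  rw [e3, hwp, hwq] at hpq
  linarith

/-- Claim 6.14: for an A/QI triple `(G,X,H)` and its cone-off, if `g` is
loxodromic on `X` with 2δ-quasi-geodesic axis whose repelling endpoint lies in the limit set
of a translate `Y = g₀ • Y₀`, then a positive power of `g` stabilizes `Y` setwise;
consequently `g` is elliptic on the cone-off. -/
theorem power_stabilizes_translate_and_elliptic
    {G X : Type*} [Group G] [MetricSpace X] [MulAction G X]
    (hiso : ∀ (g : G) (x y : X), dist (g • x) (g • y) = dist x y)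
    (δ : ℝ) (hδ : 0 < δ)
    (hhyp : ∀ w x y z : X, min (gprod w x y) (gprod w y z) - δ ≤ gprod w x z)
    (hgeo : IsGeodesicSpace X)
    (x₀ : X) (H : Subgroup G)
    (hHinf : ((H : Set G)).Infinite)
    -- H is finitely generated and quasi-isometrically embedded by the orbit map
    (S : Set G) (hSfin : S.Finite) (hSgen : Subgroup.closure S = H)
    (C : ℝ) (hC : 1 ≤ C)
    (hqie : ∀ h ∈ H, (wlen S h : ℝ) / C - C ≤ dist (h • x₀) x₀ ∧
      dist (h • x₀) x₀ ≤ C * (wlen S h) + C)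
    -- Y₀ is an H-invariant, H-cobounded, K-quasi-convex subset containing x₀
    (Y₀ : Set X) (hx₀Y₀ : x₀ ∈ Y₀) (hY₀inv : ∀ h ∈ H, h • Y₀ = Y₀)
    (hY₀cobdd : ∃ r : ℝ, 0 ≤ r ∧ ∀ y ∈ Y₀, ∃ h ∈ H, dist y (h • x₀) ≤ r)
    (K : ℝ) (hK : 0 ≤ K)
    (hY₀qc : ∀ a ∈ Y₀, ∀ b ∈ Y₀, ∀ γ : ℝ → X, γ 0 = a → γ (dist a b) = b →
      (∀ s ∈ Set.Icc (0:ℝ) (dist a b), ∀ t ∈ Set.Icc (0:ℝ) (dist a b),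
        dist (γ s) (γ t) = |s - t|) →
      ∀ u ∈ Set.Icc (0:ℝ) (dist a b), infDist (γ u) Y₀ ≤ K)
    -- acylindricity along the translates of Y₀
    (hacyl : ∀ ε : ℝ, 0 ≤ ε → ∃ D : ℝ, ∃ N : ℕ,
      ∀ T : Finset G,
        (∀ g ∈ T, ∀ g' ∈ T, g ≠ g' → g⁻¹ * g' ∉ H) →
        (∃ z w : X, (∀ g ∈ T, infDist z (g • Y₀) ≤ ε ∧ infDist w (g • Y₀) ≤ ε) ∧
          D < dist z w) →
        T.card ≤ N)
    -- the cone-off (pseudo)metric dhat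
    (dhat : X → X → ℝ)
    (dhat_self : ∀ x : X, dhat x x = 0)
    (dhat_symm : ∀ x y : X, dhat x y = dhat y x)
    (dhat_tri : ∀ x y z : X, dhat x z ≤ dhat x y + dhat y z)
    (dhat_le : ∀ x y : X, dhat x y ≤ dist x y)
    (dhat_cone : ∀ (g' : G), ∀ u ∈ g' • Y₀, ∀ v ∈ g' • Y₀, dhat u v ≤ 1)
    -- g is loxodromic on X with a 2δ-quasi-geodesic axis α
    (g : G) (α : ℝ → X)
    (hα : ∀ s t : ℝ, (2 * δ)⁻¹ * |s - t| - 2 * δ ≤ dist (α s) (α t) ∧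
      dist (α s) (α t) ≤ 2 * δ * |s - t| + 2 * δ)
    (htrans : ∃ T : ℝ, 0 < T ∧ ∃ B₀ : ℝ, ∀ s : ℝ, dist (g • α s) (α (s + T)) ≤ B₀)
    -- the repelling endpoint g^{-∞} lies in the limit set of the translate Y = g₀ • Y₀
    (g₀ : G)
    (hlim : ∃ y : ℕ → X, (∀ n, y n ∈ g₀ • Y₀) ∧
      ∀ N : ℝ, ∃ m : ℕ, ∀ n : ℕ, m ≤ n → N ≤ gprod x₀ (α (-(n : ℝ))) (y n)) :
    (∃ k : ℕ, 0 < k ∧ (g ^ k) • (g₀ • Y₀) = g₀ • Y₀) ∧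
      ∃ Ce : ℝ, ∀ n : ℤ, dhat ((g ^ n) • x₀) x₀ ≤ Ce := by
  classical
  obtain ⟨Tp, hTp, B₀, hB₀⟩ := htrans
  obtain ⟨ys, hysmem, hyl⟩ := hlim
  obtain ⟨D, N, hDN⟩ := hacyl (K + 8*δ) (by positivity)
  -- gprod is invariant under the isometric action
  have hgs : ∀ (s : G) (w x y : X), gprod (s • w) (s • x) (s • y) = gprod w x y := by
    intro s w x y; unfold gprod; rw [hiso, hiso, hiso]
  -- infDist decreases (in fact is preserved) under the action
  have hinfle : ∀ (s : G) (p : X) (A : Set X), infDist (s • p) (s • A) ≤ infDist p A := by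
    intro s p A
    rcases A.eq_empty_or_nonempty with hA | hA
    · simp [hA]
    by_contra hcon
    push_neg at hcon
    obtain ⟨y, hy, hlt⟩ := (infDist_lt_iff hA).1 hcon
    have h1 : infDist (s • p) (s • A) ≤ dist (s • p) (s • y) :=
      infDist_le_dist_of_mem (Set.smul_mem_smul_set hy)
    rw [hiso] at h1
    exact absurd (h1.trans_lt hlt) (lt_irrefl _)
  -- translates of Y₀ are K-quasi-convex
  have hqcT : ∀ (s : G), ∀ a ∈ s • Y₀, ∀ b ∈ s • Y₀, ∀ σ : ℝ → X, σ 0 = a →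
      σ (dist a b) = b →
      (∀ u ∈ Set.Icc (0:ℝ) (dist a b), ∀ v ∈ Set.Icc (0:ℝ) (dist a b),
        dist (σ u) (σ v) = |u - v|) →
      ∀ u ∈ Set.Icc (0:ℝ) (dist a b), infDist (σ u) (s • Y₀) ≤ K := by
    intro s a ha b hb σ hσ0 hσ1 hσiso u hu
    obtain ⟨a0, ha0, ha0e⟩ := ha
    obtain ⟨b0, hb0, hb0e⟩ := hb
    have hd : dist a0 b0 = dist a b := by rw [← ha0e, ← hb0e, hiso]
    have h := hY₀qc a0 ha0 b0 hb0 (fun v => s⁻¹ • σ v)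
      (by show s⁻¹ • σ 0 = a0; rw [hσ0, ← ha0e, inv_smul_smul])
      (by show s⁻¹ • σ (dist a0 b0) = b0; rw [hd, hσ1, ← hb0e, inv_smul_smul])
      (by intro u' hu' v' hv'
          rw [hd] at hu' hv'
          show dist (s⁻¹ • σ u') (s⁻¹ • σ v') = |u' - v'|
          rw [hiso]
          exact hσiso u' hu' v' hv')
      u (by rwa [hd])
    calc infDist (σ u) (s • Y₀) = infDist (s • (s⁻¹ • σ u)) (s • Y₀) := by
          rw [smul_inv_smul]
      _ ≤ infDist (s⁻¹ • σ u) Y₀ := hinfle s _ _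
      _ ≤ K := h
  -- iterated translation along the axis
  have hpowd : ∀ (m : ℕ) (s : ℝ), dist ((g ^ m)⁻¹ • α s) (α (s - m * Tp)) ≤ m * B₀ := by
    intro m
    induction m with
    | zero => intro s; simp
    | succ m ih =>
      intro s
      have hrw : (g ^ (m+1))⁻¹ • α s = (g ^ m)⁻¹ • (g⁻¹ • α s) := by
        rw [pow_succ', mul_inv_rev, mul_smul]
      have h1 : dist (g⁻¹ • α s) (α (s - Tp)) ≤ B₀ := by
        have := hB₀ (s - Tp)
        rw [sub_add_cancel] at this
        calc dist (g⁻¹ • α s) (α (s - Tp))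
            = dist (g • (g⁻¹ • α s)) (g • α (s - Tp)) := (hiso g _ _).symm
          _ = dist (α s) (g • α (s - Tp)) := by rw [smul_inv_smul]
          _ = dist (g • α (s - Tp)) (α s) := dist_comm _ _
          _ ≤ B₀ := this
      have h2 := ih (s - Tp)
      calc dist ((g ^ (m+1))⁻¹ • α s) (α (s - (m+1 : ℕ) * Tp))
          ≤ dist ((g ^ (m+1))⁻¹ • α s) ((g ^ m)⁻¹ • α (s - Tp))
            + dist ((g ^ m)⁻¹ • α (s - Tp)) (α (s - (m+1 : ℕ) * Tp)) := dist_triangle _ _ _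
        _ = dist (g⁻¹ • α s) (α (s - Tp))
            + dist ((g ^ m)⁻¹ • α (s - Tp)) (α (s - Tp - m * Tp)) := by
            rw [hrw, hiso]
            congr 2
            push_cast; ring
        _ ≤ B₀ + m * B₀ := add_le_add h1 h2
        _ = (m+1 : ℕ) * B₀ := by push_cast; ring
  have hB₀0 : 0 ≤ B₀ := le_trans dist_nonneg (hB₀ 0)
  -- constants
  have hMne : (Finset.range (N + 2)).Nonempty := ⟨0, by simp⟩
  set cstar : ℝ := (Finset.range (N + 2)).sup' hMne
    (fun m => dist x₀ ((g ^ m * g₀) • x₀)) with hcstar_def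
  set Cstar : ℝ := (Finset.range (N + 2)).sup' hMne
    (fun m => dist x₀ ((g ^ m)⁻¹ • x₀) + m * B₀ + (2 * δ * (m * Tp) + 2 * δ)) with hCstar_def
  have h0mem : (0 : ℕ) ∈ Finset.range (N + 2) := by simp
  have hcstar0 : 0 ≤ cstar :=
    le_trans dist_nonneg (Finset.le_sup' (fun m => dist x₀ ((g ^ m * g₀) • x₀)) h0mem)
  have hCstar0 : 0 ≤ Cstar := by
    have := Finset.le_sup'
      (fun m : ℕ => dist x₀ ((g ^ m)⁻¹ • x₀) + m * B₀ + (2 * δ * (m * Tp) + 2 * δ)) h0mem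
    have h0 : (0:ℝ) ≤ dist x₀ ((g ^ 0)⁻¹ • x₀) + (0:ℕ) * B₀ + (2 * δ * ((0:ℕ) * Tp) + 2 * δ) := by
      have := dist_nonneg (x := x₀) (y := (g ^ 0)⁻¹ • x₀)
      push_cast; linarith
    push_cast at this ⊢
    linarith
  set t₁ : ℝ := cstar with ht₁_def
  set t₂ : ℝ := cstar + |D| + 1 with ht₂_def
  set R : ℝ := t₂ + Cstar + δ with hR_def
  obtain ⟨n, hn'⟩ := hyl R
  have hn : R ≤ gprod x₀ (α (-(n : ℝ))) (ys n) := hn' n le_rfl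
  -- key Gromov product estimate, uniformly over the first N+2 powers
  have hkey1 : ∀ m ∈ Finset.range (N + 2),
      t₂ + δ ≤ gprod x₀ (α (-(n : ℝ))) ((g ^ m) • ys n) := by
    intro m hm
    have e0 : gprod ((g ^ m)⁻¹ • x₀) ((g ^ m)⁻¹ • α (-(n:ℝ))) (ys n)
        = gprod x₀ (α (-(n:ℝ))) ((g ^ m) • ys n) := by
      have h := hgs (g ^ m) ((g ^ m)⁻¹ • x₀) ((g ^ m)⁻¹ • α (-(n:ℝ))) (ys n)
      rw [smul_inv_smul, smul_inv_smul] at h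
      exact h.symm
    have s1 := AQI.gprod_base x₀ ((g ^ m)⁻¹ • x₀) ((g ^ m)⁻¹ • α (-(n:ℝ))) (ys n)
    have s2 := AQI.gprod_arg x₀ (α (-(n:ℝ) - m * Tp)) ((g ^ m)⁻¹ • α (-(n:ℝ))) (ys n)
    have s3 := AQI.gprod_arg x₀ (α (-(n:ℝ))) (α (-(n:ℝ) - m * Tp)) (ys n)
    have hd2 : dist (α (-(n:ℝ) - m * Tp)) ((g ^ m)⁻¹ • α (-(n:ℝ))) ≤ m * B₀ := by
      rw [dist_comm]; exact hpowd m (-(n:ℝ))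
    have hd3 : dist (α (-(n:ℝ))) (α (-(n:ℝ) - m * Tp)) ≤ 2 * δ * (m * Tp) + 2 * δ := by
      have h := (hα (-(n:ℝ)) (-(n:ℝ) - m * Tp)).2
      have habs : |(-(n:ℝ)) - (-(n:ℝ) - m * Tp)| = m * Tp := by
        rw [show (-(n:ℝ)) - (-(n:ℝ) - m * Tp) = m * Tp by ring]
        exact abs_of_nonneg (by positivity)
      rw [habs] at h
      exact h
    have hCm : dist x₀ ((g ^ m)⁻¹ • x₀) + m * B₀ + (2 * δ * (m * Tp) + 2 * δ) ≤ Cstar :=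
      Finset.le_sup'
        (fun m : ℕ => dist x₀ ((g ^ m)⁻¹ • x₀) + m * B₀ + (2 * δ * (m * Tp) + 2 * δ)) hm
    rw [e0] at s1
    linarith
  have hkey2 : ∀ m ∈ Finset.range (N + 2),
      t₂ ≤ gprod x₀ (ys n) ((g ^ m) • ys n) := by
    intro m hm
    have h := hhyp x₀ (ys n) (α (-(n:ℝ))) ((g ^ m) • ys n)
    have hsymm : gprod x₀ (ys n) (α (-(n:ℝ))) = gprod x₀ (α (-(n:ℝ))) (ys n) :=
      AQI.gprod_comm _ _ _
    have h1 := hkey1 m hm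
    have hmin : t₂ + δ ≤ min (gprod x₀ (ys n) (α (-(n:ℝ))))
        (gprod x₀ (α (-(n:ℝ))) ((g ^ m) • ys n)) := by
      refine le_min ?_ h1
      rw [hsymm]; linarith
    linarith
  -- the reference geodesic and the two witness points
  obtain ⟨γ0, hγ00, hγ01, hγ0iso⟩ := hgeo x₀ (ys n)
  have ht₁t₂ : t₁ ≤ t₂ := by
    have := abs_nonneg D; rw [ht₁_def, ht₂_def]; linarith
  have ht₂d0 : t₂ ≤ dist x₀ (ys n) := by
    have h1 := hkey2 0 h0mem
    have h2 := AQI.gprod_le_fst x₀ (ys n) ((g ^ 0) • ys n)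
    linarith
  have ht₁mem : t₁ ∈ Set.Icc (0:ℝ) (dist x₀ (ys n)) := ⟨hcstar0, le_trans ht₁t₂ ht₂d0⟩
  have ht₂mem : t₂ ∈ Set.Icc (0:ℝ) (dist x₀ (ys n)) := by
    constructor
    · have := abs_nonneg D; rw [ht₂_def]; linarith
    · exact ht₂d0
  have hdzw : dist (γ0 t₁) (γ0 t₂) = |D| + 1 := by
    rw [hγ0iso t₁ ht₁mem t₂ ht₂mem, abs_sub_comm,
      abs_of_nonneg (by rw [ht₁_def, ht₂_def]; have := abs_nonneg D; linarith)]
    rw [ht₁_def, ht₂_def]; ring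
  -- main estimate: both witness points are (K+8δ)-close to every translate gᵐ•Y
  have hmain : ∀ m ∈ Finset.range (N + 2), ∀ t : ℝ, t₁ ≤ t → t ≤ t₂ →
      infDist (γ0 t) ((g ^ m * g₀) • Y₀) ≤ K + 8 * δ := by
    intro m hm t htl htu
    have ht0 : 0 ≤ t := le_trans hcstar0 htl
    set am : X := (g ^ m) • ys n with ham_def
    set bm : X := (g ^ m * g₀) • x₀ with hbm_def
    have hamY : am ∈ (g ^ m * g₀) • Y₀ := by
      obtain ⟨y0, hy0, hy0e⟩ := hysmem n
      have hy0e' : g₀ • y0 = ys n := hy0e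
      have he : (g ^ m * g₀) • y0 = am := by rw [ham_def, mul_smul, hy0e']
      exact ⟨y0, hy0, he⟩
    have hbmY : bm ∈ (g ^ m * g₀) • Y₀ := Set.smul_mem_smul_set hx₀Y₀
    have hg2 : t₂ ≤ gprod x₀ (ys n) am := hkey2 m hm
    have htg : t ≤ gprod x₀ (ys n) am := le_trans htu hg2
    have hdm : t ≤ dist x₀ am := by
      have := AQI.gprod_comm x₀ (ys n) am
      have := AQI.gprod_le_fst x₀ am (ys n)
      calc t ≤ gprod x₀ (ys n) am := htg
        _ = gprod x₀ am (ys n) := AQI.gprod_comm _ _ _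
        _ ≤ dist x₀ am := AQI.gprod_le_fst _ _ _
    obtain ⟨γm, hγm0, hγm1, hγmiso⟩ := hgeo x₀ am
    have htw1 : dist (γ0 t) (γm t) ≤ 4 * δ :=
      AQI.twin δ hδ hhyp x₀ (ys n) am γ0 γm hγ00 hγ01 hγ0iso hγm0 hγm1 hγmiso t ht0 htg
    obtain ⟨σ, hσ0, hσ1, hσiso⟩ := hgeo bm am
    set dm : ℝ := dist x₀ am with hdm_def
    set cm : ℝ := dist x₀ bm with hcm_def
    set Lm : ℝ := dist bm am with hLm_def
    have hcmle : cm ≤ t := by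
      have h := Finset.le_sup' (fun m : ℕ => dist x₀ ((g ^ m * g₀) • x₀)) hm
      calc cm ≤ cstar := h
        _ = t₁ := rfl
        _ ≤ t := htl
    have hgab : dm - t ≤ gprod am x₀ bm := by
      have h1 := dist_triangle x₀ bm am
      have h2 : dist bm am = dist am bm := dist_comm _ _
      have h4 : dist x₀ am = dm := rfl
      have h5 : dist x₀ bm = cm := rfl
      unfold gprod
      rw [dist_comm am x₀]
      linarith
    have hgabL : gprod am x₀ bm ≤ Lm := by
      calc gprod am x₀ bm = gprod am bm x₀ := AQI.gprod_comm _ _ _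
        _ ≤ dist am bm := AQI.gprod_le_fst _ _ _
        _ = Lm := dist_comm _ _
    -- reversed geodesics from am
    set γA : ℝ → X := fun s => γm (dm - s) with hγA_def
    set γB : ℝ → X := fun s => σ (Lm - s) with hγB_def
    have hdax : dist am x₀ = dm := dist_comm _ _
    have hdab : dist am bm = Lm := dist_comm _ _
    have hA0 : γA 0 = am := by rw [hγA_def]; simp only [sub_zero]; exact hγm1
    have hA1 : γA (dist am x₀) = x₀ := by
      rw [hγA_def, hdax]; simp only [sub_self]; exact hγm0
    have hAiso : ∀ s ∈ Set.Icc (0:ℝ) (dist am x₀), ∀ u ∈ Set.Icc (0:ℝ) (dist am x₀),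
        dist (γA s) (γA u) = |s - u| := by
      intro s hs u hu
      rw [hdax] at hs hu
      rw [hγA_def]
      simp only []
      rw [hγmiso (dm - s) ⟨by linarith [hs.2], by linarith [hs.1]⟩
        (dm - u) ⟨by linarith [hu.2], by linarith [hu.1]⟩]
      rw [show dm - s - (dm - u) = u - s by ring, abs_sub_comm]
    have hB0 : γB 0 = am := by rw [hγB_def]; simp only [sub_zero]; exact hσ1
    have hB1 : γB (dist am bm) = bm := by
      rw [hγB_def, hdab]; simp only [sub_self]; exact hσ0
    have hBiso : ∀ s ∈ Set.Icc (0:ℝ) (dist am bm), ∀ u ∈ Set.Icc (0:ℝ) (dist am bm),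
        dist (γB s) (γB u) = |s - u| := by
      intro s hs u hu
      rw [hdab] at hs hu
      rw [hγB_def]
      simp only []
      rw [hσiso (Lm - s) ⟨by linarith [hs.2], by linarith [hs.1]⟩
        (Lm - u) ⟨by linarith [hu.2], by linarith [hu.1]⟩]
      rw [show Lm - s - (Lm - u) = u - s by ring, abs_sub_comm]
    have htw2 : dist (γA (dm - t)) (γB (dm - t)) ≤ 4 * δ :=
      AQI.twin δ hδ hhyp am x₀ bm γA γB hA0 hA1 hAiso hB0 hB1 hBiso (dm - t)
        (by linarith) hgab
    have hAt : γA (dm - t) = γm t := by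
      rw [hγA_def]; simp only []; congr 1; ring
    set u : ℝ := Lm - (dm - t) with hu_def
    have hu0 : 0 ≤ u := by
      have : dm - t ≤ Lm := le_trans hgab hgabL
      rw [hu_def]; linarith
    have huL : u ≤ Lm := by rw [hu_def]; linarith
    have hqc : infDist (σ u) ((g ^ m * g₀) • Y₀) ≤ K :=
      hqcT (g ^ m * g₀) bm hbmY am hamY σ hσ0 hσ1 hσiso u ⟨hu0, huL⟩
    have hBu : γB (dm - t) = σ u := by rw [hγB_def]
    calc infDist (γ0 t) ((g ^ m * g₀) • Y₀)
        ≤ infDist (σ u) ((g ^ m * g₀) • Y₀) + dist (γ0 t) (σ u) :=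
          infDist_le_infDist_add_dist
      _ ≤ K + dist (γ0 t) (σ u) := by linarith
      _ ≤ K + (dist (γ0 t) (γm t) + dist (γm t) (σ u)) := by
          linarith [dist_triangle (γ0 t) (γm t) (σ u)]
      _ ≤ K + (4 * δ + 4 * δ) := by
          have h2 : dist (γm t) (σ u) ≤ 4 * δ := by rw [← hAt, ← hBu]; exact htw2
          linarith
      _ = K + 8 * δ := by ring
  -- pigeonhole via acylindricity
  have hex : ∃ i j : ℕ, i < j ∧ j < N + 2 ∧ (g ^ i * g₀)⁻¹ * (g ^ j * g₀) ∈ H := by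
    by_contra hno
    push_neg at hno
    set Tset : Finset G := (Finset.range (N + 2)).image (fun m => g ^ m * g₀) with hTset_def
    have hpair : ∀ a ∈ Tset, ∀ b ∈ Tset, a ≠ b → a⁻¹ * b ∉ H := by
      intro a ha b hb hab
      rw [hTset_def, Finset.mem_image] at ha hb
      obtain ⟨i, hi, rfl⟩ := ha
      obtain ⟨j, hj, rfl⟩ := hb
      rw [Finset.mem_range] at hi hj
      rcases lt_trichotomy i j with h | h | h
      · exact hno i j h hj
      · exact absurd (by rw [h]) hab
      · intro hmem
        have h2 : ((g ^ i * g₀)⁻¹ * (g ^ j * g₀))⁻¹ ∈ H := inv_mem hmem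
        rw [mul_inv_rev, inv_inv] at h2
        exact hno j i h hi h2
    have hwit : ∃ z' w' : X,
        (∀ g' ∈ Tset, infDist z' (g' • Y₀) ≤ (K + 8 * δ) ∧ infDist w' (g' • Y₀) ≤ (K + 8 * δ)) ∧
        D < dist z' w' := by
      refine ⟨γ0 t₁, γ0 t₂, ?_, ?_⟩
      · intro g' hg'
        rw [hTset_def, Finset.mem_image] at hg'
        obtain ⟨m, hm, rfl⟩ := hg'
        exact ⟨hmain m hm t₁ le_rfl ht₁t₂, hmain m hm t₂ ht₁t₂ le_rfl⟩
      · rw [hdzw]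
        have := le_abs_self D
        linarith
    have hcard := hDN Tset hpair hwit
    have hinj : Set.InjOn (fun m => g ^ m * g₀) (Finset.range (N + 2)) := by
      intro i hi j hj hij
      by_contra hne
      simp only [Finset.coe_range, Set.mem_Iio] at hi hj
      rcases lt_or_gt_of_ne hne with h | h
      · refine hno i j h hj ?_
        have hij' : g ^ i * g₀ = g ^ j * g₀ := hij
        have he : (g ^ j * g₀)⁻¹ * (g ^ j * g₀) = 1 := by group
        rw [hij', he]
        exact one_mem H
      · refine hno j i h hi ?_
        have hij' : g ^ i * g₀ = g ^ j * g₀ := hij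
        have he : (g ^ j * g₀)⁻¹ * (g ^ j * g₀) = 1 := by group
        rw [hij', he]
        exact one_mem H
    rw [hTset_def, Finset.card_image_of_injOn hinj, Finset.card_range] at hcard
    omega
  obtain ⟨i, j, hij, hjN, hHmem⟩ := hex
  -- the stabilizing power
  have hkpos : 0 < j - i := by omega
  have hgj : g ^ j = g ^ i * g ^ (j - i) := by
    rw [← pow_add]
    congr 1
    omega
  have hgk : g ^ (j - i) = g₀ * ((g ^ i * g₀)⁻¹ * (g ^ j * g₀)) * g₀⁻¹ := by
    rw [hgj]
    group
  have hstab : (g ^ (j - i)) • (g₀ • Y₀) = g₀ • Y₀ := by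
    rw [hgk, mul_smul, mul_smul, inv_smul_smul, hY₀inv _ hHmem]
  refine ⟨⟨j - i, hkpos, hstab⟩, ?_⟩
  -- ellipticity on the cone-off
  set k : ℕ := j - i with hk_def
  have hstabz : ∀ q : ℤ, (g ^ ((k : ℤ) * q)) • (g₀ • Y₀) = g₀ • Y₀ := by
    intro q
    have h1 : g ^ k ∈ MulAction.stabilizer G (g₀ • Y₀) := hstab
    have h2 : (g ^ k) ^ q ∈ MulAction.stabilizer G (g₀ • Y₀) := zpow_mem h1 q
    have h3 : (g ^ k : G) ^ q = g ^ ((k : ℤ) * q) := by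
      rw [← zpow_natCast g k, ← zpow_mul]
    rwa [h3] at h2
  have hkne : (k : ℤ) ≠ 0 := by exact_mod_cast hkpos.ne'
  have hk0 : (0 : ℤ) < (k : ℤ) := by exact_mod_cast hkpos
  have hkne2 : (Finset.range k).Nonempty := ⟨0, by simpa using hkpos⟩
  set Ce' : ℝ := (Finset.range k).sup' hkne2 (fun r => dist ((g ^ (r : ℕ)) • x₀) (g₀ • x₀))
    with hCe'_def
  refine ⟨Ce' + 1 + dist (g₀ • x₀) x₀, ?_⟩
  intro nn
  set q : ℤ := nn / (k : ℤ) with hq_def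
  set r : ℤ := nn % (k : ℤ) with hr_def
  have hr0 : 0 ≤ r := Int.emod_nonneg nn hkne
  have hrk : r < (k : ℤ) := Int.emod_lt_of_pos nn hk0
  have hnn : nn = (k : ℤ) * q + r := (Int.mul_ediv_add_emod nn (k : ℤ)).symm
  have hsplit : (g ^ nn) • x₀ = (g ^ ((k:ℤ) * q)) • ((g ^ r) • x₀) := by
    rw [← mul_smul, ← zpow_add, ← hnn]
  have hmem1 : (g ^ ((k:ℤ) * q)) • (g₀ • x₀) ∈ g₀ • Y₀ := by
    have h1 : g₀ • x₀ ∈ g₀ • Y₀ := Set.smul_mem_smul_set hx₀Y₀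
    have h2 : (g ^ ((k:ℤ) * q)) • (g₀ • x₀) ∈ (g ^ ((k:ℤ) * q)) • (g₀ • Y₀) :=
      Set.smul_mem_smul_set h1
    rwa [hstabz q] at h2
  have hmem2 : g₀ • x₀ ∈ g₀ • Y₀ := Set.smul_mem_smul_set hx₀Y₀
  have hd2 : dhat ((g ^ ((k:ℤ) * q)) • (g₀ • x₀)) (g₀ • x₀) ≤ 1 :=
    dhat_cone g₀ _ hmem1 _ hmem2
  have hd1 : dhat ((g ^ nn) • x₀) ((g ^ ((k:ℤ) * q)) • (g₀ • x₀)) ≤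
      dist ((g ^ r) • x₀) (g₀ • x₀) := by
    rw [hsplit]
    calc dhat ((g ^ ((k:ℤ) * q)) • ((g ^ r) • x₀)) ((g ^ ((k:ℤ) * q)) • (g₀ • x₀))
        ≤ dist ((g ^ ((k:ℤ) * q)) • ((g ^ r) • x₀)) ((g ^ ((k:ℤ) * q)) • (g₀ • x₀)) :=
          dhat_le _ _
      _ = dist ((g ^ r) • x₀) (g₀ • x₀) := hiso _ _ _
  have hrnat : g ^ r = g ^ (r.toNat) := by
    rw [← zpow_natCast g r.toNat, Int.toNat_of_nonneg hr0]
  have hrmem : r.toNat ∈ Finset.range k := by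
    rw [Finset.mem_range]
    omega
  have hd1' : dist ((g ^ r) • x₀) (g₀ • x₀) ≤ Ce' := by
    rw [hrnat]
    exact Finset.le_sup' (fun r : ℕ => dist ((g ^ r) • x₀) (g₀ • x₀)) hrmem
  have hd3 : dhat (g₀ • x₀) x₀ ≤ dist (g₀ • x₀) x₀ := dhat_le _ _
  calc dhat ((g ^ nn) • x₀) x₀
      ≤ dhat ((g ^ nn) • x₀) ((g ^ ((k:ℤ) * q)) • (g₀ • x₀))
        + dhat ((g ^ ((k:ℤ) * q)) • (g₀ • x₀)) x₀ := dhat_tri _ _ _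
    _ ≤ dhat ((g ^ nn) • x₀) ((g ^ ((k:ℤ) * q)) • (g₀ • x₀))
        + (dhat ((g ^ ((k:ℤ) * q)) • (g₀ • x₀)) (g₀ • x₀) + dhat (g₀ • x₀) x₀) := by
        linarith [dhat_tri ((g ^ ((k:ℤ) * q)) • (g₀ • x₀)) (g₀ • x₀) x₀]
    _ ≤ Ce' + (1 + dist (g₀ • x₀) x₀) := by linarith
    _ = Ce' + 1 + dist (g₀ • x₀) x₀ := by ring
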